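/- arXiv:2104.15031 — 4 statements merged into one kernel-verified Lean document; each statement's English description precedes it below -/
import Mathlib

section
/- Suppose μ is a singular cardinal which is a limit of strongly compact cardinals. Then Pr₁(μ⁺, μ⁺, 2, cf(μ)⁺) fails. -/
/-!
Suppose `c` witnesses `Pr₁(μ⁺, μ⁺, 2, θ⁺)` with `θ = cf μ`, and let `⟨νᵢ : i < θ⟩` be cofinal in `μ`.
Strong compactness gives, for each `i`, a uniform `νᵢ⁺`-complete ultrafilter `Uᵢ` on `μ⁺`. Let
`τᵢ(α)` be the `Uᵢ`-majority colour of `c(α, ·)` and `tᵢ` the `Uᵢ`-majority value of `τᵢ`.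
Fix injections `gξ : ξ → μ` and let `X(ξ, i) = {ζ < ξ | gξ(ζ) < νᵢ}`, a set of size `≤ |νᵢ|`.
By a recursion of length `μ⁺` (the point `x(ξ, i)` being its `(θ·ξ + i)`-th term) build increasing
blocks `⟨x(ξ, i) : i < θ⟩`, `ξ < μ⁺`, choosing `x(ξ, i)` in the `Uᵢ`-large set of `β` with
`τᵢ(β) = tᵢ` and `c(x(ζ, i), β) = τᵢ(x(ζ, i))` for all `ζ ∈ X(ξ, i)`; then
`c(x(ζ, i), x(ξ, i)) = tᵢ` whenever `ζ ∈ X(ξ, i)`. Some colour `τ` equals `tᵢ` for cofinally many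
`νᵢ`; given blocks `ζ < ξ`, pick such an `i` with `νᵢ > gξ(ζ)`, so that `ζ ∈ X(ξ, i)` and
`c(x(ζ, i), x(ξ, i)) = τ`. Hence no two blocks are homogeneous in the other colour.
-/

open Cardinal Ordinal Set

noncomputable section

/-- The order type of a set of ordinals. -/
def otp (s : Set Ordinal) : Ordinal := Ordinal.type ((· < ·) : s → s → Prop)

/-- `a < b` for sets of ordinals: every element of `a` is below every element of `b`. -/
def SetLT (a b : Set Ordinal.{0}) : Prop := ∀ α ∈ a, ∀ β ∈ b, α < β

/-- `A` is a pairwise disjoint subfamily of `[κ]^σ`: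
a family of subsets of (ordinals below) `κ` of order type `σ`, pairwise disjoint. -/
def IsFamily (κ σ : Ordinal.{0}) (A : Set (Set Ordinal)) : Prop :=
  (∀ a ∈ A, a ⊆ Set.Iio κ ∧ otp a = Ordinal.lift.{1} σ) ∧ A.PairwiseDisjoint id

/-- Shelah's principle `Pr₁(κ, κ, θ, χ)`. -/
def Pr1 (κ θ χ : Cardinal.{0}) : Prop :=
  ∃ c : Ordinal → Ordinal → Ordinal,
    (∀ α β : Ordinal, α < β → β < κ.ord → c α β < θ.ord) ∧
    ∀ σ : Ordinal, σ < χ.ord → ∀ A : Set (Set Ordinal),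
      IsFamily κ.ord σ A → #A = Cardinal.lift.{1} κ →
      ∀ τ : Ordinal, τ < θ.ord →
        ∃ a ∈ A, ∃ b ∈ A, SetLT a b ∧ ∀ α ∈ a, ∀ β ∈ b, c α β = τ
/-- `D` is a club (closed unbounded set) in `κ`. -/
def ClubIn (D : Set Ordinal.{0}) (κ : Ordinal.{0}) : Prop :=
  D ⊆ Set.Iio κ ∧ (∀ α < κ, ∃ β ∈ D, α ≤ β) ∧
    ∀ δ < κ, 0 < δ → (∀ γ < δ, ∃ x ∈ D, γ < x ∧ x < δ) → δ ∈ D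

/-- `S` is a stationary subset of `κ`. -/
def StatIn (S : Set Ordinal.{0}) (κ : Ordinal.{0}) : Prop :=
  S ⊆ Set.Iio κ ∧ ∀ D : Set Ordinal, ClubIn D κ → (S ∩ D).Nonempty

/-- `δ` is an accumulation point belonging to `s`, i.e. `δ ∈ acc(s)`:
`δ ∈ s` and `sup(s ∩ δ) = δ > 0`. -/
def IsAccOf (s : Set Ordinal.{0}) (δ : Ordinal.{0}) : Prop :=
  δ ∈ s ∧ 0 < δ ∧ ∀ γ < δ, ∃ x ∈ s, γ < x ∧ x < δ

/-- `C` is a C-sequence over `κ`: each `C α` is a closed subset of `α`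
with `sup (C α) = sup α`. -/
def IsCSeq (κ : Ordinal.{0}) (C : Ordinal.{0} → Set Ordinal.{0}) : Prop :=
  (∀ α < κ, C α ⊆ Set.Iio α) ∧
  (∀ α < κ, ∀ δ, 0 < δ → δ < α → (∀ γ < δ, ∃ x ∈ C α, γ < x ∧ x < δ) → δ ∈ C α) ∧
  (∀ α < κ, ∀ γ : Ordinal, (∀ x ∈ C α, x ≤ γ) → ∀ δ < α, δ ≤ γ)

/-- The upper trace of the walk from `β` down to `α` along the C-sequence `C`. -/
def Tr (C : Ordinal.{0} → Set Ordinal.{0}) (α β : Ordinal.{0}) : ℕ → Ordinal.{0}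
  | 0 => β
  | n + 1 => if α < Tr C α β n then sInf (C (Tr C α β n) ∩ Set.Ici α) else α

/-- The length `ρ₂(α,β)` of the walk from `β` down to `α`. -/
def rho2 (C : Ordinal.{0} → Set Ordinal.{0}) (α β : Ordinal.{0}) : ℕ :=
  sInf {n | Tr C α β n = α}

/-- The (finite) trace `tr(α,β)` of the walk, as a list. -/
def trL (C : Ordinal.{0} → Set Ordinal.{0}) (α β : Ordinal.{0}) : List Ordinal.{0} :=
  (List.range (rho2 C α β)).map (Tr C α β)

/-- `λ(α,β) = max_{i<ρ₂(α,β)} sup (C_{Tr(α,β)(i)} ∩ α)`. -/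
def lamb (C : Ordinal.{0} → Set Ordinal.{0}) (α β : Ordinal.{0}) : Ordinal.{0} :=
  (Finset.range (rho2 C α β)).sup fun i => sSup (C (Tr C α β i) ∩ Set.Iio α)

/-- `η_{α,β} := min { n < ω ∣ η ∈ C_{Tr(α,β)(n)} or n = ρ₂(α,β) } + 1`. -/
def etaIdx (C : Ordinal.{0} → Set Ordinal.{0}) (η α β : Ordinal.{0}) : ℕ :=
  sInf {n | η ∈ C (Tr C α β n) ∨ n = rho2 C α β} + 1

/-- The transformation principle `Pℓ₁(κ, θ, χ)`. -/
def Pl1 (κ θ χ : Cardinal.{0}) : Prop :=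
  ∃ t : Ordinal.{0} → Ordinal.{0} → Ordinal.{0} × Ordinal.{0} × Ordinal.{0},
    (∀ α β : Ordinal, α < β → β < κ.ord →
      (t α β).1 ≤ (t α β).2.1 ∧ (t α β).2.1 ≤ α ∧ α < (t α β).2.2 ∧ (t α β).2.2 ≤ β) ∧
    ∀ σ : Ordinal, σ < χ.ord → ∀ A : Set (Set Ordinal),
      IsFamily κ.ord σ A → #A = Cardinal.lift.{1} κ →
      ∃ S : Set Ordinal, StatIn S κ.ord ∧
        ∀ αs ∈ S, ∀ βs ∈ S, αs < βs →
          ∀ τ : Ordinal, τ < θ.ord → τ < αs →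
            ∃ a ∈ A, ∃ b ∈ A, SetLT a b ∧
              ∀ α ∈ a, ∀ β ∈ b, t α β = (τ, αs, βs)

/-- The transformation principle `Pℓ₂(κ, Γ, χ)`. -/
def Pl2 (κ : Cardinal.{0}) (Γ : Set Ordinal.{0}) (χ : Cardinal.{0}) : Prop :=
  ∃ t : Ordinal.{0} → Ordinal.{0} → Ordinal.{0} × Ordinal.{0},
    (∀ α β : Ordinal, α < β → β < κ.ord →
      (t α β).1 ≤ α ∧ α < (t α β).2 ∧ (t α β).2 ≤ β) ∧
    ∀ σ : Ordinal, σ < χ.ord → ∀ A : Set (Set Ordinal),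
      IsFamily κ.ord σ A → #A = Cardinal.lift.{1} κ →
      ∃ D : Set Ordinal, ClubIn D κ.ord ∧
        ∀ αs ∈ Γ ∩ D, ∀ βs ∈ Γ ∩ D, αs < βs →
          ∃ a ∈ A, ∃ b ∈ A, SetLT a b ∧
            ∀ α ∈ a, ∀ β ∈ b, t α β = (αs, βs)

/-- The principle `Pr₁⁺(κ, θ, χ)`. -/
def Pr1plus (κ θ χ : Cardinal.{0}) : Prop :=
  ∃ o : Ordinal.{0} → Ordinal.{0} → Ordinal.{0},
    (∀ α β : Ordinal, 0 < α → α < β → β < κ.ord → o α β < α ∧ o α β < θ.ord) ∧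
    ∀ ζ : Ordinal, ζ < θ.ord → ∀ σ : Ordinal, σ < χ.ord →
      ∀ A : Set (Set Ordinal), IsFamily κ.ord σ A → #A = Cardinal.lift.{1} κ →
        ∃ γ < κ.ord, ∀ b : Set Ordinal,
          b ⊆ Set.Iio κ.ord → b ⊆ Set.Ici γ → otp b = Ordinal.lift.{1} σ →
          ∃ a ∈ A, a ⊆ Set.Iio γ ∧ ∀ α ∈ a, ∀ β ∈ b, o α β = ζ

/-- The oscillation principle `Pℓ₆(κ, χ)`. -/
def Pl6 (κ χ : Cardinal.{0}) : Prop :=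
  ∃ d : List Ordinal.{0} → ℕ,
    ∀ (u v : Ordinal.{0} → Set (List Ordinal.{0}))
      (s : Ordinal.{0} → List Ordinal.{0}) (φ : Ordinal.{0} → Ordinal.{0}),
      (∃ ε < κ.ord, ∀ α : Ordinal, ε ≤ α → α < κ.ord → φ α < α) →
      (∀ α < κ.ord, (u α).Nonempty ∧ #(u α) < Cardinal.lift.{1} χ ∧
        ∀ ϱ ∈ u α, (∀ x ∈ ϱ, x < κ.ord) ∧ α ∈ ϱ) →
      (∀ α < κ.ord, (v α).Nonempty ∧ #(v α) < Cardinal.lift.{1} χ ∧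
        ∀ σl ∈ v α, (∀ x ∈ σl, x < κ.ord) ∧ (s α ++ [α]) <+: σl) →
      ∃ α β : Ordinal, α < β ∧ β < κ.ord ∧ φ α = φ β ∧
        ∀ ϱ ∈ u α, ∀ σl ∈ v β, d (ϱ ++ σl) = ϱ.length

/-- Shelah's principle `Pr₆(κ, κ, θ, χ)`. -/
def Pr6 (κ θ χ : Cardinal.{0}) : Prop :=
  ∃ d : List Ordinal.{0} → Ordinal.{0},
    (∀ l, d l < θ.ord) ∧
    ∀ τ : Ordinal, τ < θ.ord → ∀ E : Set Ordinal, ClubIn E κ.ord →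
      ∀ u v : Ordinal.{0} → Set (List Ordinal.{0}),
        (∀ α ∈ E, (u α).Nonempty ∧ #(u α) < Cardinal.lift.{1} χ ∧
          ∀ ϱ ∈ u α, (∀ x ∈ ϱ, x < κ.ord) ∧ α ∈ ϱ) →
        (∀ α ∈ E, (v α).Nonempty ∧ #(v α) < Cardinal.lift.{1} χ ∧
          ∀ σl ∈ v α, (∀ x ∈ σl, x < κ.ord) ∧ α ∈ σl) →
        ∃ α ∈ E, ∃ β ∈ E, α < β ∧
          ∀ ϱ ∈ u α, ∀ σl ∈ v β, d (ϱ ++ σl) = τ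

/-- The square principle `□(κ)`. -/
def SquarePrin (κ : Ordinal.{0}) : Prop :=
  ∃ C : Ordinal.{0} → Set Ordinal.{0},
    (∀ α < κ, C α ⊆ Set.Iio α) ∧
    (∀ α < κ, Order.IsSuccLimit α →
      (∀ γ < α, ∃ x ∈ C α, γ < x) ∧
      (∀ δ < α, 0 < δ → (∀ γ < δ, ∃ x ∈ C α, γ < x ∧ x < δ) → δ ∈ C α)) ∧
    (∀ α < κ, ∀ δ, IsAccOf (C α) δ → C α ∩ Set.Iio δ = C δ) ∧
    ¬ ∃ D : Set Ordinal, ClubIn D κ ∧ ∀ δ, IsAccOf D δ → D ∩ Set.Iio δ = C δ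

/-- The stick principle `⫯(κ)` (with witnesses of size `μ`). -/
def Stick (κ μ : Cardinal.{0}) : Prop :=
  ∃ X : Ordinal.{0} → Set Ordinal.{0},
    (∀ γ < κ.ord, X γ ⊆ Set.Iio κ.ord) ∧
    ∀ Y : Set Ordinal, Y ⊆ Set.Iio κ.ord → #Y = Cardinal.lift.{1} κ →
      ∃ γ < κ.ord, X γ ⊆ Y ∧ #(X γ) = Cardinal.lift.{1} μ

/-- A filter is `λ`-complete: it is closed under intersections of fewer than `λ` sets. -/
def FilterComplete (lam : Cardinal.{0}) {α : Type 1} (F : Filter α) : Prop :=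
  ∀ ι : Type 1, #ι < Cardinal.lift.{1} lam →
    ∀ f : ι → Set α, (∀ i, f i ∈ F) → (⋂ i, f i) ∈ F

/-- `lam` is a strongly compact cardinal: every `lam`-complete (proper) filter
extends to a `lam`-complete ultrafilter. -/
def IsStronglyCompact (lam : Cardinal.{0}) : Prop :=
  ∀ (α : Type 1) (F : Filter α), F.NeBot → FilterComplete lam F →
    ∃ U : Ultrafilter α, (↑U : Filter α) ≤ F ∧ FilterComplete lam (↑U : Filter α)

/-- `last(α,β)`: `α` if `λ(α,β) < α`, and otherwise `min(im(tr(α,β)))`. -/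
def lastStep (C : Ordinal.{0} → Set Ordinal.{0}) (α β : Ordinal.{0}) : Ordinal.{0} :=
  if lamb C α β < α then α else sInf {x | ∃ i < rho2 C α β, Tr C α β i = x}

open Filter

universe u v

theorem mul_add_lt_mul_of_lt {a b c d : Ordinal} (hb : b < a) (hcd : c < d) :
    a * c + b < a * d :=
  calc a * c + b < a * c + a := add_lt_add_right hb _
    _ = a * Order.succ c := (Ordinal.mul_succ a c).symm
    _ ≤ a * d := mul_le_mul_right (Order.succ_le_of_lt hcd) a

theorem mul_add_lt_ord {κ : Cardinal} (hκ : ℵ₀ ≤ κ) {a b c : Ordinal} (ha : a < κ.ord)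
    (hb : b < a) (hc : c < κ.ord) : a * c + b < κ.ord :=
  (mul_add_lt_mul_of_lt hb (Order.lt_succ c)).trans
    (isPrincipal_mul_ord hκ ha ((isSuccLimit_ord hκ).succ_lt hc))

theorem exists_cofinal_of_isSuccLimit {o : Ordinal.{u}} (ho : Order.IsSuccLimit o) :
    ∃ ν : Ordinal → Ordinal,
      (∀ i < o.cof.ord, ν i < o) ∧ ∀ x < o, ∃ i ∈ Iio o.cof.ord, x < ν i := by
  obtain ⟨f, hf⟩ := exists_isFundamentalSeq (o := o) rfl
  let ν i := if h : i < o.cof.ord then (f ⟨i, h⟩ : Ordinal) else 0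
  have hν (i) (hi : i < o.cof.ord) : ν i = f ⟨i, hi⟩ := dif_pos hi
  refine ⟨ν, fun i hi => hν i hi ▸ (f ⟨i, hi⟩).2, fun x hx => ?_⟩
  obtain ⟨_, ⟨⟨i, hi⟩, rfl⟩, hxi⟩ := hf.isCofinal_range ⟨Order.succ x, ho.succ_lt hx⟩
  exact ⟨i, hi, hν i hi ▸ Order.succ_le_iff.1 (Subtype.coe_le_coe.2 hxi)⟩

theorem exists_injOn_mapsTo_Iio_ord_card (ξ : Ordinal.{u}) :
    ∃ g : Ordinal → Ordinal, InjOn g (Iio ξ) ∧ MapsTo g (Iio ξ) (Iio ξ.card.ord) := by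
  obtain ⟨e⟩ : Nonempty (Iio ξ ≃ Iio ξ.card.ord) :=
    Cardinal.eq.1 (by rw [Cardinal.mk_Iio_ordinal, Cardinal.mk_Iio_ordinal, card_ord])
  refine ⟨fun ζ => if h : ζ < ξ then e ⟨ζ, h⟩ else 0,
    fun ζ hζ ζ' hζ' h => ?_, fun ζ hζ => ?_⟩
  · simp only [dif_pos (show ζ < ξ from hζ), dif_pos (show ζ' < ξ from hζ')] at h
    exact congrArg Subtype.val (e.injective (Subtype.ext h))
  · simpa only [dif_pos (show ζ < ξ from hζ)] using (e ⟨ζ, hζ⟩).2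

theorem mk_inter_preimage_Iio_le {s : Set Ordinal.{u}} {g : Ordinal.{u} → Ordinal.{u}}
    (hg : InjOn g s) (a : Ordinal.{u}) :
    #(s ∩ g ⁻¹' Iio a : Set Ordinal) ≤ Cardinal.lift.{u + 1} a.card := by
  rw [← mk_image_eq_of_injOn _ _ (hg.mono inter_subset_left), ← Cardinal.mk_Iio_ordinal]
  exact mk_le_mk_of_subset (image_subset_iff.2 inter_subset_right)

section Majority

variable {α : Type u}

open Classical in
def majorityColor (U : Ultrafilter α) (f : α → Ordinal.{v}) : Ordinal.{v} :=
  if {x | f x = 0} ∈ U then 0 else 1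

def majorityColor₂ (U : Ultrafilter α) (c : α → α → Ordinal.{v}) : Ordinal.{v} :=
  majorityColor U fun a => majorityColor U (c a)

theorem majorityColor_lt_two (U : Ultrafilter α) (f : α → Ordinal.{v}) :
    majorityColor U f < 2 := by
  unfold majorityColor
  split_ifs <;> norm_num

theorem majorityColor₂_lt_two (U : Ultrafilter α) (c : α → α → Ordinal.{v}) :
    majorityColor₂ U c < 2 :=
  majorityColor_lt_two U _

theorem eventually_eq_majorityColor {U : Ultrafilter α} {f : α → Ordinal.{v}}
    (hf : ∀ᶠ x in U, f x < 2) : ∀ᶠ x in U, f x = majorityColor U f := by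
  unfold majorityColor
  split_ifs with h
  · exact h
  · filter_upwards [hf, Ultrafilter.compl_mem_iff_notMem.2 h] with x hx hx0
    exact (Order.le_one_iff.1 (Order.lt_two_iff.1 hx)).resolve_left hx0

theorem exists_cofinal_color_class {ι β : Type*} [LinearOrder β] {s : Set ι} {o : β}
    {ν : ι → β} (hν : ∀ x < o, ∃ i ∈ s, x < ν i) (col : ι → Ordinal)
    (hcol : ∀ i, col i < 2) :
    ∃ τ, ∀ x < o, ∃ i ∈ s, col i = τ ∧ x < ν i := by
  by_contra! h
  obtain ⟨x₀, hx₀, h₀⟩ := h 0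
  obtain ⟨x₁, hx₁, h₁⟩ := h 1
  obtain ⟨i, hi, hxi⟩ := hν (max x₀ x₁) (max_lt hx₀ hx₁)
  rcases Order.le_one_iff.1 (Order.lt_two_iff.1 (hcol i)) with hi0 | hi1
  · exact (h₀ i hi hi0).not_gt ((le_max_left _ _).trans_lt hxi)
  · exact (h₁ i hi hi1).not_gt ((le_max_right _ _).trans_lt hxi)

end Majority

section Completeness

variable {lam : Cardinal.{0}} {α : Type 1} {F : Filter α}

theorem FilterComplete.mono {lam' : Cardinal.{0}} (hF : FilterComplete lam' F)
    (h : lam ≤ lam') : FilterComplete lam F :=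
  fun ι hι f hf => hF ι (hι.trans_le (lift_le.2 h)) f hf

theorem FilterComplete.eventually_forall_mem (hF : FilterComplete lam F) {β : Type 1}
    {S : Set β} (hS : #S < lift lam) {P : β → α → Prop}
    (hP : ∀ i ∈ S, ∀ᶠ a in F, P i a) :
    ∀ᶠ a in F, ∀ i ∈ S, P i a :=
  mem_of_superset (hF S hS (fun i => {a | P i a}) fun i => hP i i.2)
    fun _ ha i hi => mem_iInter.1 ha ⟨i, hi⟩

theorem exists_ultrafilter_Ioo_mem_of_isStronglyCompact {κ : Cardinal.{0}} (hκ : κ.IsRegular)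
    (hlam : lam ≤ κ) (hsc : IsStronglyCompact lam) :
    ∃ U : Ultrafilter Ordinal.{0}, (∀ M < κ.ord, Ioo M κ.ord ∈ U) ∧
      FilterComplete lam (U : Filter Ordinal.{0}) := by
  let F := cocardinal Ordinal.{0} hκ.lift ⊓ 𝓟 (Iio κ.ord)
  have hF : F.NeBot :=
    cocardinal_inf_principal_neBot_iff.2 (by rw [Cardinal.mk_Iio_ordinal, card_ord])
  have hFc : FilterComplete lam F := fun ι hι f hf =>
    (cardinal_iInter_mem (hι.trans_le (lift_le.2 hlam))).2 hf
  obtain ⟨U, hUF, hUc⟩ := hsc _ F hF hFc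
  refine ⟨U, fun M hM => hUF ?_, hUc⟩
  have hMκ : Order.succ M < κ.ord := (isSuccLimit_ord hκ.aleph0_le).succ_lt hM
  have hIic : #(Iic M) < lift κ := by
    refine (mk_le_mk_of_subset (Iic_subset_Iio.2 (Order.lt_succ M))).trans_lt ?_
    rwa [Cardinal.mk_Iio_ordinal, Cardinal.lift_lt, ← lt_ord]
  rw [← Ioi_inter_Iio, ← compl_Iic]
  exact inter_mem_inf (compl_mem_cocardinal_of_card_lt hIic) (mem_principal_self _)

end Completeness

theorem exists_forall_mem_of_nonempty {α : Type*} [Nonempty α] {o : Ordinal.{u}}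
    (T : Ordinal.{u} → (Ordinal.{u} → α) → Set α)
    (hT : ∀ δ p q, (∀ γ < δ, p γ = q γ) → T δ p = T δ q)
    (hne : ∀ δ < o, ∀ p, (∀ γ < δ, p γ ∈ T γ p) → (T δ p).Nonempty) :
    ∃ p : Ordinal → α, ∀ δ < o, p δ ∈ T δ p := by
  let p : Ordinal → α := Ordinal.lt_wf.fix fun δ ih =>
    Classical.epsilon
      (· ∈ T δ fun γ => if h : γ < δ then ih γ h else Classical.arbitrary α)
  have hp : ∀ δ, p δ = Classical.epsilon (· ∈ T δ p) := fun δ => by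
    refine (Ordinal.lt_wf.fix_eq _ δ).trans ?_
    rw [hT δ _ p fun γ hγ => dif_pos hγ]
  refine ⟨p, fun δ => ?_⟩
  induction δ using WellFoundedLT.induction with
  | _ δ ih =>
    intro hδ
    rw [hp]
    exact Classical.epsilon_spec (hne δ hδ p fun γ hγ => ih γ hγ (hγ.trans hδ))

theorem exists_strictMonoOn_forall_mem {κ : Cardinal.{u}} (hκ : κ.IsRegular)
    (F : Ordinal.{u} → Ultrafilter Ordinal.{u})
    (R : Ordinal.{u} → (Ordinal.{u} → Ordinal.{u}) → Set Ordinal.{u})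
    (hR : ∀ δ p q, (∀ γ < δ, p γ = q γ) → R δ p = R δ q)
    (hF : ∀ δ < κ.ord, ∀ M < κ.ord, Ioo M κ.ord ∈ F δ)
    (hRF : ∀ δ < κ.ord, ∀ p, (∀ γ < δ, p γ < κ.ord) → R δ p ∈ F δ) :
    ∃ p, StrictMonoOn p (Iio κ.ord) ∧ MapsTo p (Iio κ.ord) (Iio κ.ord) ∧
      ∀ δ < κ.ord, p δ ∈ R δ p := by
  obtain ⟨p, hp⟩ := exists_forall_mem_of_nonempty (o := κ.ord)
    (fun δ p => R δ p ∩ {β | β < κ.ord ∧ ∀ γ < δ, p γ < β})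
    (fun δ p q h => congrArg₂ (· ∩ ·) (hR δ p q h) <| Set.ext fun β =>
      and_congr_right' (forall₂_congr fun γ hγ => by rw [h γ hγ]))
    (fun δ hδ p hp => by
      have hsup : ⨆ γ : Iio δ, p γ < κ.ord := by
        refine lift_iSup_lt_of_lt_cof ?_ fun γ => (hp γ γ.2).2.1
        rwa [← lift_cof, hκ.cof_ord, Cardinal.mk_Iio_ordinal, Cardinal.lift_lift,
          Cardinal.lift_lt, ← lt_ord]
      obtain ⟨β, hβR, hβM, hβκ⟩ := (F δ).nonempty_of_mem
        (inter_mem (hRF δ hδ p fun γ hγ => (hp γ hγ).2.1) (hF δ hδ _ hsup))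
      exact ⟨β, hβR, hβκ, fun γ hγ => (Ordinal.le_iSup _ ⟨γ, hγ⟩).trans_lt hβM⟩)
  exact ⟨p, fun γ _ δ hδ hγδ => (hp δ hδ).2.2 γ hγδ, fun δ hδ => (hp δ hδ).2.1,
    fun δ hδ => (hp δ hδ).1⟩

theorem exists_strictMonoOn_color_eq_majorityColor {κ : Cardinal.{0}} (hκ : κ.IsRegular)
    {c : Ordinal → Ordinal → Ordinal} (hc : ∀ α β, α < β → β < κ.ord → c α β < 2)
    (F : Ordinal → Ultrafilter Ordinal) (lam : Ordinal → Cardinal) (Y : Ordinal → Set Ordinal)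
    (hF : ∀ δ < κ.ord, ∀ M < κ.ord, Ioo M κ.ord ∈ F δ)
    (hFc : ∀ δ < κ.ord, FilterComplete (lam δ) (F δ : Filter Ordinal))
    (hY : ∀ δ, Y δ ⊆ Iio δ) (hYc : ∀ δ < κ.ord, #(Y δ) < lift (lam δ)) :
    ∃ p, StrictMonoOn p (Iio κ.ord) ∧ MapsTo p (Iio κ.ord) (Iio κ.ord) ∧ ∀ δ < κ.ord,
      majorityColor (F δ) (c (p δ)) = majorityColor₂ (F δ) c ∧
      ∀ γ ∈ Y δ, c (p γ) (p δ) = majorityColor (F δ) (c (p γ)) := by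
  refine exists_strictMonoOn_forall_mem hκ F
    (fun δ p => {β | majorityColor (F δ) (c β) = majorityColor₂ (F δ) c ∧
      ∀ γ ∈ Y δ, c (p γ) β = majorityColor (F δ) (c (p γ))})
    (fun δ p q h => Set.ext fun β =>
      and_congr_right' (forall₂_congr fun γ hγ => by rw [h γ (hY δ hγ)]))
    hF fun δ hδ p hp => ?_
  refine (eventually_eq_majorityColor (.of_forall fun _ => majorityColor_lt_two _ _)).and
    ((hFc δ hδ).eventually_forall_mem (hYc δ hδ) fun γ hγ => eventually_eq_majorityColor ?_)
  exact mem_of_superset (hF δ hδ _ (hp γ (hY δ hγ))) fun β hβ => hc _ _ hβ.1 hβ.2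

theorem exists_strictMonoOn_block_color_eq {κ : Cardinal.{0}} (hκ : κ.IsRegular)
    {Θ : Ordinal} (hΘ0 : Θ ≠ 0) (hΘ : Θ < κ.ord)
    {c : Ordinal → Ordinal → Ordinal} (hc : ∀ α β, α < β → β < κ.ord → c α β < 2)
    (U : Ordinal → Ultrafilter Ordinal) (lam : Ordinal → Cardinal)
    (X : Ordinal → Ordinal → Set Ordinal)
    (hU : ∀ i < Θ, ∀ M < κ.ord, Ioo M κ.ord ∈ U i)
    (hUc : ∀ i < Θ, FilterComplete (lam i) (U i : Filter Ordinal))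
    (hX : ∀ ξ i, X ξ i ⊆ Iio ξ)
    (hXc : ∀ ξ < κ.ord, ∀ i < Θ, #(X ξ i) < lift (lam i)) :
    ∃ p, StrictMonoOn p (Iio κ.ord) ∧ MapsTo p (Iio κ.ord) (Iio κ.ord) ∧
      ∀ ξ' < κ.ord, ∀ i < Θ, ∀ ξ ∈ X ξ' i,
        c (p (Θ * ξ + i)) (p (Θ * ξ' + i)) = majorityColor₂ (U i) c := by
  have hmod (δ : Ordinal) : δ % Θ < Θ := Ordinal.mod_lt δ hΘ0
  have hdiv_lt (δ : Ordinal) (hδ : δ < κ.ord) : δ / Θ < κ.ord :=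
    (Ordinal.div_le_of_le_mul (Ordinal.le_mul_right δ (pos_iff_ne_zero.2 hΘ0))).trans_lt hδ
  obtain ⟨p, hp_mono, hp_maps, hp⟩ := exists_strictMonoOn_color_eq_majorityColor hκ hc
    (fun δ => U (δ % Θ)) (fun δ => lam (δ % Θ))
    (fun δ => (fun ξ => Θ * ξ + δ % Θ) '' X (δ / Θ) (δ % Θ))
    (fun δ _ => hU _ (hmod δ)) (fun δ _ => hUc _ (hmod δ))
    (fun δ => by
      rintro _ ⟨ξ, hξ, rfl⟩
      exact (mul_add_lt_mul_of_lt (hmod δ) (hX _ _ hξ)).trans_le (Ordinal.mul_div_le δ Θ))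
    (fun δ hδ => mk_image_le.trans_lt (hXc _ (hdiv_lt δ hδ) _ (hmod δ)))
  refine ⟨p, hp_mono, hp_maps, fun ξ' hξ' i hi ξ hξ => ?_⟩
  have hdiv (ζ : Ordinal) : (Θ * ζ + i) / Θ = ζ := by
    rw [Ordinal.mul_add_div _ hΘ0, Ordinal.div_eq_zero_of_lt hi, add_zero]
  have hmod' (ζ : Ordinal) : (Θ * ζ + i) % Θ = i := by
    rw [Ordinal.mul_add_mod_self, Ordinal.mod_eq_of_lt hi]
  have hrow := (hp _ (mul_add_lt_ord hκ.aleph0_le hΘ hi hξ')).2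
  have hcol := (hp _ (mul_add_lt_ord hκ.aleph0_le hΘ hi ((hX ξ' i hξ).trans hξ'))).1
  simp only [hdiv, hmod'] at hrow hcol
  rw [hrow _ ⟨ξ, hξ, rfl⟩, hcol]

theorem SetLT.disjoint {a b : Set Ordinal} (h : SetLT a b) : Disjoint a b :=
  disjoint_left.2 fun x hx hx' => lt_irrefl x (h x hx x hx')

def block (p : Ordinal.{0} → Ordinal.{0}) (Θ ξ : Ordinal.{0}) : Set Ordinal.{0} :=
  (fun i => p (Θ * ξ + i)) '' Iio Θ

section Blocks

variable {κ : Cardinal.{0}} {Θ : Ordinal.{0}} {p : Ordinal.{0} → Ordinal.{0}}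

theorem setLT_block (hκ : ℵ₀ ≤ κ) (hΘ : Θ < κ.ord) (hp : StrictMonoOn p (Iio κ.ord))
    {ξ ξ' : Ordinal} (h : ξ < ξ') (hξ' : ξ' < κ.ord) :
    SetLT (block p Θ ξ) (block p Θ ξ') := by
  rintro _ ⟨i, hi, rfl⟩ _ ⟨j, hj, rfl⟩
  have hlt : Θ * ξ + i < Θ * ξ' + j := (mul_add_lt_mul_of_lt hi h).trans_le le_self_add
  exact hp (hlt.trans (mul_add_lt_ord hκ hΘ hj hξ')) (mul_add_lt_ord hκ hΘ hj hξ') hlt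

theorem lt_of_setLT_block (hκ : ℵ₀ ≤ κ) (hΘ0 : Θ ≠ 0) (hΘ : Θ < κ.ord)
    (hp : StrictMonoOn p (Iio κ.ord)) {ξ ξ' : Ordinal} (hξ : ξ < κ.ord)
    (h : SetLT (block p Θ ξ) (block p Θ ξ')) : ξ < ξ' := by
  by_contra! hle
  have hΘpos : 0 < Θ := pos_iff_ne_zero.2 hΘ0
  have hlt := h _ ⟨0, hΘpos, rfl⟩ _ ⟨0, hΘpos, rfl⟩
  refine hlt.not_ge ((hp.le_iff_le ?_ (mul_add_lt_ord hκ hΘ hΘpos hξ)).2 ?_)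
  · exact mul_add_lt_ord hκ hΘ hΘpos (hle.trans_lt hξ)
  · simpa only [add_zero] using mul_le_mul_right hle Θ

theorem otp_block (hκ : ℵ₀ ≤ κ) (hΘ : Θ < κ.ord) (hp : StrictMonoOn p (Iio κ.ord))
    {ξ : Ordinal} (hξ : ξ < κ.ord) : otp (block p Θ ξ) = Ordinal.lift.{1} Θ := by
  have hm : StrictMonoOn (fun i => p (Θ * ξ + i)) (Iio Θ) := fun i hi j hj hij =>
    hp (mul_add_lt_ord hκ hΘ hi hξ) (mul_add_lt_ord hκ hΘ hj hξ)
      ((add_lt_add_iff_left _).2 hij)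
  exact (type_eq.2 ⟨(hm.orderIso _ _).symm.toRelIsoLT⟩).trans (type_lt_Iio Θ)

theorem isFamily_block (hκ : ℵ₀ ≤ κ) (hΘ : Θ < κ.ord) (hp : StrictMonoOn p (Iio κ.ord))
    (hp' : MapsTo p (Iio κ.ord) (Iio κ.ord)) : IsFamily κ.ord Θ (block p Θ '' Iio κ.ord) := by
  refine ⟨?_, ?_⟩
  · rintro _ ⟨ξ, hξ, rfl⟩
    exact ⟨image_subset_iff.2 fun i hi => hp' (mul_add_lt_ord hκ hΘ hi hξ),
      otp_block hκ hΘ hp hξ⟩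
  · rintro _ ⟨ξ, hξ, rfl⟩ _ ⟨ξ', hξ', rfl⟩ hne
    rcases lt_trichotomy ξ ξ' with h | rfl | h
    · exact (setLT_block hκ hΘ hp h hξ').disjoint
    · exact absurd rfl hne
    · exact (setLT_block hκ hΘ hp h hξ).disjoint.symm

theorem mk_image_block (hκ : ℵ₀ ≤ κ) (hΘ0 : Θ ≠ 0) (hΘ : Θ < κ.ord)
    (hp : StrictMonoOn p (Iio κ.ord)) : #(block p Θ '' Iio κ.ord) = lift κ := by
  have hinj : InjOn (block p Θ) (Iio κ.ord) := by
    intro ξ hξ ξ' hξ' h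
    have hx (η : Ordinal) : p (Θ * η + 0) ∈ block p Θ η :=
      ⟨0, pos_iff_ne_zero.2 hΘ0, rfl⟩
    rcases lt_trichotomy ξ ξ' with hlt | heq | hlt
    · exact absurd (setLT_block hκ hΘ hp hlt hξ' _ (hx ξ) _ (h ▸ hx ξ)) (lt_irrefl _)
    · exact heq
    · exact absurd (setLT_block hκ hΘ hp hlt hξ _ (hx ξ') _ (h.symm ▸ hx ξ')) (lt_irrefl _)
  rw [mk_image_eq_of_injOn _ _ hinj, Cardinal.mk_Iio_ordinal, card_ord]

end Blocks

theorem not_Pr1_of_forall_exists_ultrafilter {μ : Cardinal.{0}} (hμ : ℵ₀ ≤ μ)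
    (hU : ∀ ν < μ, ∃ U : Ultrafilter Ordinal.{0},
      (∀ M < (Order.succ μ).ord, Ioo M (Order.succ μ).ord ∈ U) ∧
        FilterComplete (Order.succ ν) (U : Filter Ordinal)) :
    ¬ Pr1 (Order.succ μ) 2 (Order.succ μ.ord.cof) := by
  rintro ⟨c, hc, hPr⟩
  set κ := Order.succ μ
  set Θ := μ.ord.cof.ord
  have hκ : κ.IsRegular := isRegular_succ hμ
  have hκ₀ : ℵ₀ ≤ κ := hκ.aleph0_le
  have hΘ0 : Θ ≠ 0 := by
    simpa [Θ, Ordinal.cof_eq_zero, Cardinal.ord_eq_zero] using (isSuccLimit_ord hμ).ne_bot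
  have hΘ : Θ < κ.ord := ord_lt_ord.2 ((cof_ord_le μ).trans_lt (Order.lt_succ μ))
  have hc2 : ∀ α β, α < β → β < κ.ord → c α β < 2 := by
    simpa only [ord_ofNat] using hc
  obtain ⟨ν, hν, hν_cofinal⟩ := exists_cofinal_of_isSuccLimit (isSuccLimit_ord hμ)
  choose! U hU_unif hU_compl using fun i (hi : i < Θ) => hU (ν i).card (lt_ord.1 (hν i hi))
  choose g hg_inj hg_maps using exists_injOn_mapsTo_Iio_ord_card
  obtain ⟨p, hp_mono, hp_maps, hp⟩ := exists_strictMonoOn_block_color_eq hκ hΘ0 hΘ hc2 U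
    (fun i => Order.succ (ν i).card) (fun ξ i => Iio ξ ∩ g ξ ⁻¹' Iio (ν i))
    hU_unif hU_compl
    (fun _ _ => inter_subset_left) fun ξ _ i _ =>
      (mk_inter_preimage_Iio_le (hg_inj ξ) _).trans_lt (lift_lt.2 (Order.lt_succ _))
  obtain ⟨τ, hτ⟩ := exists_cofinal_color_class hν_cofinal (fun i => majorityColor₂ (U i) c)
    fun i => majorityColor₂_lt_two _ _
  have hτ_eq : ∀ τ' < 2, τ' = τ := by
    intro τ' hτ'
    obtain ⟨_, ⟨ξ, hξ, rfl⟩, _, ⟨ξ', hξ', rfl⟩, hlt, hconst⟩ :=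
      hPr Θ (ord_lt_ord.2 (Order.lt_succ _)) _ (isFamily_block hκ₀ hΘ hp_mono hp_maps)
        (mk_image_block hκ₀ hΘ0 hΘ hp_mono) τ' (by rwa [ord_ofNat])
    have hξξ' := lt_of_setLT_block hκ₀ hΘ0 hΘ hp_mono hξ hlt
    have hgμ : g ξ' ξ < μ.ord := (hg_maps ξ' hξξ').trans_le
      (ord_le_ord.2 (Order.lt_succ_iff.1 (lt_ord.1 hξ')))
    obtain ⟨i, hi, hiτ, hgi⟩ := hτ _ hgμ
    rw [← hiτ, ← hp ξ' hξ' i hi ξ ⟨hξξ', hgi⟩]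
    exact (hconst _ ⟨i, hi, rfl⟩ _ ⟨i, hi, rfl⟩).symm
  exact zero_ne_one ((hτ_eq 0 two_pos).trans (hτ_eq 1 one_lt_two).symm)

theorem Pr1_fails_limit_of_strongly_compact_general (μ : Cardinal.{0})
    (hinf : ℵ₀ ≤ μ)
    (hlim : ∀ θ < μ, ∃ lam : Cardinal, θ < lam ∧ lam < μ ∧ IsStronglyCompact lam) :
    ¬ Pr1 (Order.succ μ) 2 (Order.succ μ.ord.cof) := by
  refine not_Pr1_of_forall_exists_ultrafilter hinf fun ν hν => ?_
  obtain ⟨lam, hν_lam, hlam_μ, hlam⟩ := hlim ν hν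
  obtain ⟨U, hU_unif, hU_compl⟩ := exists_ultrafilter_Ioo_mem_of_isStronglyCompact
    (isRegular_succ hinf) (hlam_μ.le.trans (Order.le_succ μ)) hlam
  exact ⟨U, hU_unif, hU_compl.mono (Order.succ_le_of_lt hν_lam)⟩

/-- If `μ` is a singular limit of strongly compact cardinals,
then `Pr₁(μ⁺, μ⁺, 2, cf(μ)⁺)` fails. -/
theorem Pr1_fails_limit_of_strongly_compact (μ : Cardinal.{0})
    (hinf : ℵ₀ ≤ μ) (hsing : μ.ord.cof < μ)
    (hlim : ∀ θ < μ, ∃ lam : Cardinal, θ < lam ∧ lam < μ ∧ IsStronglyCompact lam) :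
    ¬ Pr1 (Order.succ μ) 2 (Order.succ μ.ord.cof) :=
  Pr1_fails_limit_of_strongly_compact_general μ hinf hlim
end
end

section
/- For every infinite cardinal μ and every map d : <ω μ → 2, there exist i < 2 and families ⟨u_α | α < μ⟩, ⟨v_β | β < μ⟩ with: each u_α a singleton {ϱ} with α ∈ im(ϱ); each v_β a subset of <ω μ of size |β| all of whose elements have β in their image; such that for every pair α < β < μ there are ϱ ∈ u_α and σ ∈ v_β with d(ϱ⌢σ) ≠ i. In particular Pr₆(μ, μ, 2, μ) fails. -/
/-!
The two colours are separated by a single dichotomy. Either every pair `a, b < μ` can be joined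
by some word `w` over `μ` with `d (a a w b) = 0`, or some pair `a₀, b₀` admits no such word.
In the first case take `u_α = {⟨α⟩}` and `v_β = {⟨x⟩ ⌢ w(x, β) ⌢ ⟨β⟩ | x < β}`: for `α < β` the
concatenation `⟨α⟩ ⌢ ⟨α⟩ ⌢ w(α, β) ⌢ ⟨β⟩` has colour `0`, so colour `1` fails. In the second take
`u_α = {⟨a₀, a₀, α⟩}` and `v_β = {⟨x, β, b₀⟩ | x < β}`: the concatenation is `a₀ a₀ (α α β) b₀`,
whose colour is not `0`. Since `u_α` is a singleton and `|v_β| = |β| < μ`, these families are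
admissible for `Pr₆(μ, μ, 2, μ)` on the club `(0, μ)`, so no `d` witnesses it.
-/

open Cardinal Ordinal Set

noncomputable section

def Pr6Counterexample (μ : Cardinal.{0}) (d : List Ordinal.{0} → Fin 2) : Prop :=
  ∃ (i : Fin 2) (u v : Ordinal.{0} → Set (List Ordinal.{0})),
    (∀ α < μ.ord, ∃ ϱ : List Ordinal, u α = {ϱ} ∧ (∀ x ∈ ϱ, x < μ.ord) ∧ α ∈ ϱ) ∧
    (∀ β < μ.ord, #(v β) = Cardinal.lift.{1} β.card ∧
      ∀ σl ∈ v β, (∀ x ∈ σl, x < μ.ord) ∧ β ∈ σl) ∧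
    (∀ α β : Ordinal, α < β → β < μ.ord →
      ∃ ϱ ∈ u α, ∃ σl ∈ v β, d (ϱ ++ σl) ≠ i)

lemma mk_image_cons_Iio (t : Ordinal.{0} → List Ordinal.{0}) (β : Ordinal.{0}) :
    #((fun x => x :: t x) '' Iio β) = Cardinal.lift.{1} β.card := by
  rw [Cardinal.mk_image_eq_of_injOn _ _ fun x _ y _ h => (List.cons.inj h).1]
  exact Cardinal.mk_Iio_ordinal β

/-- Both cases of the dichotomy: `u_α = {p ⌢ ⟨α⟩}` and `v_β = {⟨x⟩ ⌢ t x β | x < β}`. -/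
lemma pr6Counterexample_of_prefix_tails (μ : Cardinal.{0}) (d : List Ordinal.{0} → Fin 2)
    (i : Fin 2) (p : List Ordinal.{0}) (t : Ordinal.{0} → Ordinal.{0} → List Ordinal.{0})
    (hp : ∀ x ∈ p, x < μ.ord)
    (ht : ∀ x β, x < β → β < μ.ord → (∀ y ∈ t x β, y < μ.ord) ∧ β ∈ t x β)
    (hd : ∀ α β, α < β → β < μ.ord → d (p ++ [α] ++ α :: t α β) ≠ i) :
    Pr6Counterexample μ d := by
  refine ⟨i, fun α => {p ++ [α]}, fun β => (fun x => x :: t x β) '' Iio β, ?_, ?_, ?_⟩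
  · intro α hα
    refine ⟨_, rfl, ?_, by simp⟩
    simpa only [List.mem_append, List.mem_singleton, forall_eq_or_imp, forall_eq]
      using fun x hx => hx.elim (hp x) (· ▸ hα)
  · intro β hβ
    refine ⟨mk_image_cons_Iio _ β, ?_⟩
    rintro _ ⟨x, hx, rfl⟩
    obtain ⟨ht_lt, ht_mem⟩ := ht x β hx hβ
    refine ⟨?_, List.mem_cons_of_mem x ht_mem⟩
    simpa only [List.mem_cons, forall_eq_or_imp] using ⟨(mem_Iio.mp hx).trans hβ, ht_lt⟩
  · intro α β hαβ hβ
    exact ⟨_, rfl, _, ⟨α, hαβ, rfl⟩, hd α β hαβ hβ⟩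

lemma pr6Counterexample (μ : Cardinal.{0}) (d : List Ordinal.{0} → Fin 2) :
    Pr6Counterexample μ d := by
  by_cases hjoin : ∀ a b, a < μ.ord → b < μ.ord →
      ∃ w : List Ordinal.{0}, (∀ x ∈ w, x < μ.ord) ∧ d ([a, a] ++ w ++ [b]) = 0
  · choose! w hw_lt hw_d using hjoin
    refine pr6Counterexample_of_prefix_tails μ d 1 [] (fun x β => w x β ++ [β]) (by simp)
      (fun x β hxβ hβ => ⟨?_, by simp⟩) (fun α β hαβ hβ => ?_)
    · simpa only [List.mem_append, List.mem_singleton] using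
        fun y hy => hy.elim (hw_lt x β (hxβ.trans hβ) hβ y) (· ▸ hβ)
    · simpa using hw_d α β (hαβ.trans hβ) hβ ▸ (by decide : (0 : Fin 2) ≠ 1)
  · push Not at hjoin
    obtain ⟨a₀, b₀, ha₀, hb₀, hno_word⟩ := hjoin
    refine pr6Counterexample_of_prefix_tails μ d 0 [a₀, a₀] (fun _ β => [β, b₀])
      (by simp [ha₀]) (fun x β _ hβ => ⟨by simp [hβ, hb₀], by simp⟩) (fun α β hαβ hβ => ?_)
    have hαμ := hαβ.trans hβ
    simpa using hno_word [α, α, β] (by simp [hαμ, hβ])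

lemma clubIn_Ioo_zero {κ : Ordinal.{0}} (hκ : 1 < κ) : ClubIn (Ioo 0 κ) κ :=
  ⟨fun _ hx => hx.2,
    fun α hα => ⟨max α 1, ⟨zero_lt_one.trans_le (le_max_right _ _), max_lt hα hκ⟩,
      le_max_left _ _⟩,
    fun _ hδ hδ0 _ => ⟨hδ0, hδ⟩⟩

lemma not_Pr6_of_pr6Counterexample {μ : Cardinal.{0}} (hinf : ℵ₀ ≤ μ)
    (h : ∀ d, Pr6Counterexample μ d) : ¬ Pr6 μ 2 μ := by
  rintro ⟨d, -, hd⟩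
  -- A counterexample to the `Fin 2` collapse of `d` defeats `d` itself at the colour `i`.
  obtain ⟨i, u, v, hu, hv, hfail⟩ := h fun l => if d l = 0 then 0 else 1
  have hone : 1 < μ.ord :=
    Cardinal.lt_ord.mpr (by simpa using Cardinal.one_lt_aleph0.{0}.trans_le hinf)
  have hτ : ((i : ℕ) : Ordinal.{0}) < (2 : Cardinal.{0}).ord := by
    simpa using (Nat.cast_lt (α := Ordinal.{0})).mpr i.isLt
  obtain ⟨α, hα, β, hβ, hαβ, hcol⟩ := hd _ hτ _ (clubIn_Ioo_zero hone) u v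
    (fun α hα => by
      obtain ⟨ϱ, hu_eq, hϱ⟩ := hu α hα.2
      rw [hu_eq]
      refine ⟨singleton_nonempty ϱ, ?_, by simpa using hϱ⟩
      have : 1 < Cardinal.lift.{1} μ := Cardinal.one_lt_aleph0.trans_le (aleph0_le_lift.mpr hinf)
      simpa using this)
    (fun β hβ => by
      obtain ⟨hcard, hmem⟩ := hv β hβ.2
      refine ⟨?_, ?_, hmem⟩
      · rw [← Set.nonempty_coe_sort, ← Cardinal.mk_ne_zero_iff, hcard, ne_eq, Cardinal.lift_eq_zero, Ordinal.card_eq_zero]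
        exact hβ.1.ne'
      · exact hcard ▸ Cardinal.lift_lt.mpr (Cardinal.lt_ord.mp hβ.2))
  obtain ⟨ϱ, hϱ, σl, hσl, hne⟩ := hfail α β hαβ hβ.2
  apply hne
  simp only [hcol ϱ hϱ σl hσl]
  fin_cases i <;> simp

/-- For every infinite cardinal `μ` and every `d : <ω μ → 2`, there are
a color `i < 2` and families (with `u_α` singletons and `|v_β| = |β|`)
witnessing the failure of `d`; in particular `Pr₆(μ, μ, 2, μ)` fails. -/
theorem Pr6_fails (μ : Cardinal.{0}) (hinf : ℵ₀ ≤ μ) :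
    (∀ d : List Ordinal.{0} → Fin 2,
      ∃ (i : Fin 2) (u v : Ordinal.{0} → Set (List Ordinal.{0})),
        (∀ α < μ.ord, ∃ ϱ : List Ordinal, u α = {ϱ} ∧ (∀ x ∈ ϱ, x < μ.ord) ∧ α ∈ ϱ) ∧
        (∀ β < μ.ord, #(v β) = Cardinal.lift.{1} β.card ∧
          ∀ σl ∈ v β, (∀ x ∈ σl, x < μ.ord) ∧ β ∈ σl) ∧
        (∀ α β : Ordinal, α < β → β < μ.ord →
          ∃ ϱ ∈ u α, ∃ σl ∈ v β, d (ϱ ++ σl) ≠ i)) ∧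
    ¬ Pr6 μ 2 μ :=
  ⟨pr6Counterexample μ, not_Pr6_of_pr6Counterexample hinf (pr6Counterexample μ)⟩

end
end

section
/- For every singular cardinal μ, the principle Pℓ₆(μ⁺, μ) fails. -/
open Cardinal Ordinal Set

noncomputable section

/-!
Write every `x < μ⁺` as a union `⋃ i, E x i` of `cf μ < μ` sets of size `< μ`, and call `x` good at
`i` if some `y` has `d [x, y] = 1` and `d [c, x, y] = 2` for all `c ∈ E x i`. Feed `Pℓ₆` the
sequences `u x = {[x]} ∪ {[c, x] | c ∈ E x i}` for an index `i` at which `x` is bad (if any),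
`v x = {[x]} ∪ {[x, yᵢ] | i}` for witnesses `yᵢ` of goodness, and colour `x` by whether it is good
at every index. If `α < β` get the same colour and both are good, then `α ∈ E β i` for some `i` and
`d ([α] ++ [β, yᵢ])` is forced to be both `1` and `2`; if both are bad, `β` itself witnesses that
`α` is good at its bad index.
-/

theorem exists_iUnion_eq_Iio_of_card_le {μ : Cardinal.{u}} (hμ : ℵ₀ ≤ μ)
    {S : Set μ.ord.ToType} (hS : IsCofinal S) {x : Ordinal.{u}} (hx : x.card ≤ μ) :
    ∃ E : S → Set Ordinal.{u}, (∀ s, #(E s) < Cardinal.lift.{u + 1} μ) ∧ ⋃ s, E s = Iio x := by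
  obtain ⟨g⟩ : Nonempty (Iio x ↪ μ.ord.ToType) := by
    rw [← lift_mk_le', Cardinal.mk_Iio_ordinal, mk_ord_toType, Cardinal.lift_lift,
      Cardinal.lift_le]
    exact hx
  refine ⟨fun s => Subtype.val '' (g ⁻¹' Iic s.1), fun s => ?_, ?_⟩
  · calc #(Subtype.val '' (g ⁻¹' Iic s.1))
        ≤ #(g ⁻¹' Iic s.1) := mk_image_le
      _ ≤ Cardinal.lift #(Iic s.1) :=
          (Cardinal.lift_id'.{u, u + 1} _).symm.trans_le
            (mk_preimage_of_injective_lift g _ g.injective)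
      _ < Cardinal.lift μ := Cardinal.lift_lt.mpr <| by
          simpa using mk_Iic_lt s.1 (by simp) (by simpa using hμ)
  · ext c
    simp only [mem_iUnion, mem_image, mem_preimage, mem_Iic]
    constructor
    · rintro ⟨s, c, -, rfl⟩
      exact c.2
    · intro hc
      obtain ⟨s, hs, hle⟩ := hS (g ⟨c, hc⟩)
      exact ⟨⟨s, hs⟩, ⟨c, hc⟩, hle, rfl⟩

theorem mk_insert_lt_of_lt {α : Type u} {c : Cardinal.{u}} (hc : ℵ₀ ≤ c) (a : α) {s : Set α}
    (hs : #s < c) : #(insert a s : Set α) < c :=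
  mk_insert_le.trans_lt <| add_lt_of_lt hc hs (one_lt_aleph0.trans_le hc)

theorem left_family_of_cover {κ χ : Cardinal.{0}} {ι : Type} (hχ : ℵ₀ ≤ χ)
    {E : Ordinal → ι → Set Ordinal}
    (hE : ∀ x < κ.ord, (∀ i, #(E x i) < lift.{1} χ) ∧ ⋃ i, E x i = Iio x) (b : Ordinal → ι) :
    ∀ x < κ.ord, (insert [x] ((fun c => [c, x]) '' E x (b x))).Nonempty ∧
      #(insert [x] ((fun c => [c, x]) '' E x (b x)) : Set (List Ordinal)) < lift.{1} χ ∧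
      ∀ ϱ ∈ insert [x] ((fun c => [c, x]) '' E x (b x)), (∀ c ∈ ϱ, c < κ.ord) ∧ x ∈ ϱ := by
  refine fun x hx => ⟨insert_nonempty _ _, mk_insert_lt_of_lt (aleph0_le_lift.mpr hχ) _
    (mk_image_le.trans_lt ((hE x hx).1 _)), ?_⟩
  rintro ϱ (rfl | ⟨c, hc, rfl⟩)
  · simpa using hx
  · have hcx : c < x := by
      rw [← mem_Iio, ← (hE x hx).2]
      exact mem_iUnion_of_mem _ hc
    simpa using ⟨hcx.trans hx, hx⟩

theorem right_family_of_range {κ χ : Cardinal.{0}} {ι : Type} (hχ : ℵ₀ ≤ χ) (hι : #ι < χ)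
    {w : Ordinal → ι → Ordinal} (hw : ∀ x i, w x i < κ.ord) :
    ∀ x < κ.ord, (insert [x] (range fun i => [x, w x i])).Nonempty ∧
      #(insert [x] (range fun i => [x, w x i]) : Set (List Ordinal)) < lift.{1} χ ∧
      ∀ σ ∈ insert [x] (range fun i => [x, w x i]), (∀ c ∈ σ, c < κ.ord) ∧ ([] ++ [x]) <+: σ := by
  refine fun x hx => ⟨insert_nonempty _ _, mk_insert_lt_of_lt (aleph0_le_lift.mpr hχ) _ ?_, ?_⟩
  · have h := mk_range_le_lift (f := fun i => [x, w x i])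
    rw [Cardinal.lift_uzero] at h
    exact h.trans_lt (lift_lt.mpr hι)
  · rintro σ (rfl | ⟨i, rfl⟩)
    · simpa using hx
    · simpa using ⟨hx, hw x i⟩

theorem not_Pl6_of_cover {κ χ : Cardinal.{0}} {ι : Type} (hκ : 2 < κ) (hχ : ℵ₀ ≤ χ)
    (hι : #ι < χ) (E : Ordinal → ι → Set Ordinal)
    (hE : ∀ x < κ.ord, (∀ i, #(E x i) < lift.{1} χ) ∧ ⋃ i, E x i = Iio x) :
    ¬ Pl6 κ χ := by
  classical
  rintro ⟨d, hd⟩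
  have hκ2 : (2 : Ordinal) < κ.ord := by simpa using Cardinal.lt_ord.mpr (by simpa using hκ)
  have hE_mem {x c} (hx : x < κ.ord) : c < x ↔ ∃ i, c ∈ E x i := by
    rw [← mem_Iio, ← (hE x hx).2, mem_iUnion]
  have : Nonempty ι := ⟨((hE_mem (one_lt_two.trans hκ2)).mp zero_lt_one).choose⟩
  set Good : Ordinal → ι → Prop := fun x i =>
    ∃ y < κ.ord, d [x, y] = 1 ∧ ∀ c ∈ E x i, d [c, x, y] = 2
  choose b hb using fun x => forall_imp_iff_exists_imp.mp (id : (∀ i, Good x i) → ∀ i, Good x i)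
  have hw (x i) : ∃ y < κ.ord, Good x i → d [x, y] = 1 ∧ ∀ c ∈ E x i, d [c, x, y] = 2 :=
    (em (Good x i)).elim (fun ⟨y, hy, hW⟩ => ⟨y, hy, fun _ => hW⟩)
      fun h => ⟨0, hκ2.trans' two_pos, fun h' => absurd h' h⟩
  choose w hw_lt hw using hw
  set φ : Ordinal → Ordinal := fun x => if ∀ i, Good x i then 0 else 1
  have hφ : ∃ ε < κ.ord, ∀ x, ε ≤ x → x < κ.ord → φ x < x := by
    refine ⟨2, hκ2, fun x hx _ => lt_of_lt_of_le ?_ hx⟩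
    simp only [φ]; split <;> simp
  obtain ⟨α, β, hαβ, hβ, hφαβ, hsplit⟩ := hd _ _ (fun _ => []) φ hφ
    (left_family_of_cover hχ hE b) (right_family_of_range hχ hι hw_lt)
  by_cases hα : ∀ i, Good α i
  · have hβ' : ∀ i, Good β i := by
      by_contra h
      simp only [φ, if_pos hα, if_neg h] at hφαβ
      exact zero_ne_one hφαβ
    obtain ⟨i, hi⟩ := (hE_mem hβ).mp hαβ
    have h1 : d [α, β, w β i] = 1 :=
      hsplit [α] (mem_insert _ _) [β, w β i] (mem_insert_of_mem _ ⟨i, rfl⟩)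
    have h2 : d [α, β, w β i] = 2 := (hw β i (hβ' i)).2 α hi
    omega
  · exact hα <| hb α ⟨β, hβ, hsplit [α] (mem_insert _ _) [β] (mem_insert _ _),
      fun c hc => hsplit [c, α] (mem_insert_of_mem _ ⟨c, hc, rfl⟩) [β] (mem_insert _ _)⟩

/-- For every singular cardinal `μ`, the principle `Pℓ₆(μ⁺, μ)` fails. -/
theorem Pl6_fails_at_successor_of_singular (μ : Cardinal.{0})
    (hinf : ℵ₀ ≤ μ) (hsing : μ.ord.cof < μ) :
    ¬ Pl6 (Order.succ μ) μ := by
  obtain ⟨S, hS, hScard⟩ := Order.exists_cof_eq μ.ord.ToType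
  have htwo : (2 : Cardinal) < Order.succ μ :=
    (natCast_lt_aleph0 (n := 2)).trans_le hinf |>.trans (Order.lt_succ μ)
  have hcover (x : Ordinal) : ∃ E : S → Set Ordinal, x < (Order.succ μ).ord →
      (∀ s, #(E s) < lift.{1} μ) ∧ ⋃ s, E s = Iio x := by
    by_cases hx : x < (Order.succ μ).ord
    · obtain ⟨E, hE⟩ := exists_iUnion_eq_Iio_of_card_le hinf hS
        (Order.lt_succ_iff.mp (Cardinal.lt_ord.mp hx))
      exact ⟨E, fun _ => hE⟩
    · exact ⟨fun _ => ∅, fun h => absurd h hx⟩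
  choose E hE using hcover
  exact not_Pl6_of_cover htwo hinf (by rwa [hScard, cof_toType]) E hE

end
end

section
/- Let κ be a regular uncountable cardinal, let ⟨C_α | α < κ⟩ be a C-sequence, and let λ : [κ]² → κ be the associated function from walks on ordinals. Then for all ordinals α < δ < β < κ with λ(δ, β) < α, the walk trace satisfies tr(α, β) = tr(δ, β) ⌢ tr(α, δ). -/
open Cardinal Ordinal Set

noncomputable section

/-!
While the walk from `β` down to `δ` is above `δ`, every `C_γ` it meets misses the interval
`(λ(δ,β), δ)`, which contains `[α, δ)`. So the walk from `β` down to `α` takes the same steps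
until it reaches `δ`, and from there on it is the walk from `δ` down to `α`.
-/

section Walks

variable {κo : Ordinal} {C : Ordinal → Set Ordinal} {α β : Ordinal}

theorem Tr_add (n m : ℕ) : Tr C α β (n + m) = Tr C α (Tr C α β n) m := by
  induction m with
  | zero => rfl
  | succ m ih => rw [← Nat.add_assoc, Tr.eq_2, Tr.eq_2, ih]

theorem Tr_succ_of_lt {n : ℕ} (h : α < Tr C α β n) :
    Tr C α β (n + 1) = sInf (C (Tr C α β n) ∩ Ici α) :=
  if_pos h

theorem Tr_succ_of_not_lt {n : ℕ} (h : ¬α < Tr C α β n) : Tr C α β (n + 1) = α :=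
  if_neg h

theorem sSup_inter_Iio_le_lamb {i : ℕ} (hi : i < rho2 C α β) :
    sSup (C (Tr C α β i) ∩ Iio α) ≤ lamb C α β :=
  Finset.le_sup (f := fun i => sSup (C (Tr C α β i) ∩ Iio α)) (Finset.mem_range.2 hi)

theorem rho2_eq_of_lt_Tr {n : ℕ} (hn : Tr C α β n = α) (hlt : ∀ k < n, α < Tr C α β k) :
    rho2 C α β = n :=
  le_antisymm (Nat.sInf_le hn) <|
    le_csInf ⟨n, hn⟩ fun k hk => not_lt.1 fun hkn => (hlt k hkn).ne' hk

namespace IsCSeq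

theorem exists_mem_Ici (hC : IsCSeq κo C) {γ : Ordinal} (hγ : γ < κo) (hα₀ : 0 < α)
    (hαγ : α < γ) : ∃ x ∈ C γ, α ≤ x := by
  by_contra! hbelow
  by_cases hcof : ∀ γ' < α, ∃ x ∈ C γ, γ' < x ∧ x < α
  · exact (hbelow α (hC.2.1 γ hγ α hα₀ hαγ hcof)).false
  · push Not at hcof
    obtain ⟨γ', hγ'α, hgap⟩ := hcof
    have hbound : ∀ x ∈ C γ, x ≤ γ' := fun x hx =>
      not_lt.1 fun h => (hgap x hx h).not_gt (hbelow x hx)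
    exact (hC.2.2 γ hγ γ' hbound α hαγ).not_gt hγ'α

theorem sInf_inter_Ici_mem_Ico (hC : IsCSeq κo C) {γ : Ordinal} (hγ : γ < κo)
    (hαγ : α < γ) : sInf (C γ ∩ Ici α) ∈ Ico α γ := by
  rcases (C γ ∩ Ici α).eq_empty_or_nonempty with hempty | hne
  · -- the set can only be empty when `α = 0`, and then `sInf ∅ = 0 = α`
    obtain rfl : α = 0 := by
      by_contra hα₀
      obtain ⟨x, hx, hαx⟩ := hC.exists_mem_Ici hγ (pos_iff_ne_zero.2 hα₀) hαγ
      exact hempty.subset ⟨hx, hαx⟩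
    rw [hempty, Ordinal.sInf_empty]
    exact ⟨le_rfl, hαγ⟩
  · obtain ⟨hmem, hαle⟩ := csInf_mem hne
    exact ⟨hαle, hC.1 γ hγ hmem⟩

theorem Tr_mem_Icc (hC : IsCSeq κo C) (hαβ : α ≤ β) (hβ : β < κo) (n : ℕ) :
    Tr C α β n ∈ Icc α β := by
  induction n with
  | zero => exact ⟨hαβ, le_rfl⟩
  | succ n ih =>
    by_cases hα : α < Tr C α β n
    · obtain ⟨hle, hlt⟩ := hC.sInf_inter_Ici_mem_Ico (ih.2.trans_lt hβ) hα
      rw [Tr_succ_of_lt hα]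
      exact ⟨hle, hlt.le.trans ih.2⟩
    · rw [Tr_succ_of_not_lt hα]
      exact ⟨le_rfl, hαβ⟩

theorem Tr_rho2 (hC : IsCSeq κo C) (hαβ : α ≤ β) (hβ : β < κo) :
    Tr C α β (rho2 C α β) = α := by
  obtain ⟨n, hn⟩ := WellFounded.not_rel_apply_succ (r := (· < ·)) (Tr C α β)
  have hreach : Tr C α β (n + 1) = α := by
    by_cases hα : α < Tr C α β n
    · have hTr : Tr C α β n < κo := (hC.Tr_mem_Icc hαβ hβ n).2.trans_lt hβ
      rw [Tr_succ_of_lt hα] at hn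
      exact absurd (hC.sInf_inter_Ici_mem_Ico hTr hα).2 hn
    · exact Tr_succ_of_not_lt hα
  exact Nat.sInf_mem (s := {n | Tr C α β n = α}) ⟨n + 1, hreach⟩

theorem lt_Tr_of_lt_rho2 (hC : IsCSeq κo C) (hαβ : α ≤ β) (hβ : β < κo) {i : ℕ}
    (hi : i < rho2 C α β) : α < Tr C α β i :=
  (hC.Tr_mem_Icc hαβ hβ i).1.lt_of_ne' (Nat.notMem_of_lt_sInf hi)

variable {δ : Ordinal}

theorem Tr_eq_Tr_of_lamb_lt (hC : IsCSeq κo C) (hαδ : α ≤ δ) (hδβ : δ ≤ β)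
    (hβ : β < κo) (hlamb : lamb C δ β < α) {i : ℕ} (hi : i ≤ rho2 C δ β) :
    Tr C α β i = Tr C δ β i := by
  induction i with
  | zero => rfl
  | succ i ih =>
    have hi' : i < rho2 C δ β := hi
    have hδ : δ < Tr C δ β i := hC.lt_Tr_of_lt_rho2 hδβ hβ hi'
    have hα : α < Tr C α β i := ih hi'.le ▸ hαδ.trans_lt hδ
    have hgap : C (Tr C δ β i) ∩ Ici α = C (Tr C δ β i) ∩ Ici δ := by
      refine Set.ext fun x => ⟨fun ⟨hx, hαx⟩ => ⟨hx, mem_Ici.2 (not_lt.1 fun hxδ => ?_)⟩,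
        fun ⟨hx, hδx⟩ => ⟨hx, hαδ.trans hδx⟩⟩
      have hx_le : x ≤ sSup (C (Tr C δ β i) ∩ Iio δ) :=
        le_csSup ⟨δ, fun y hy => hy.2.le⟩ ⟨hx, hxδ⟩
      exact (hx_le.trans (sSup_inter_Iio_le_lamb hi')).not_gt (hlamb.trans_le hαx)
    rw [Tr_succ_of_lt hα, Tr_succ_of_lt hδ, ih hi'.le, hgap]

theorem Tr_rho2_add_of_lamb_lt (hC : IsCSeq κo C) (hαδ : α ≤ δ) (hδβ : δ ≤ β)
    (hβ : β < κo) (hlamb : lamb C δ β < α) (j : ℕ) :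
    Tr C α β (rho2 C δ β + j) = Tr C α δ j := by
  rw [Tr_add, hC.Tr_eq_Tr_of_lamb_lt hαδ hδβ hβ hlamb le_rfl, hC.Tr_rho2 hδβ hβ]

theorem rho2_eq_add_of_lamb_lt (hC : IsCSeq κo C) (hαδ : α ≤ δ) (hδβ : δ ≤ β)
    (hβ : β < κo) (hlamb : lamb C δ β < α) : rho2 C α β = rho2 C δ β + rho2 C α δ := by
  have hδ : δ < κo := hδβ.trans_lt hβ
  refine rho2_eq_of_lt_Tr ?_ fun k hk => ?_
  · rw [hC.Tr_rho2_add_of_lamb_lt hαδ hδβ hβ hlamb, hC.Tr_rho2 hαδ hδ]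
  rcases lt_or_ge k (rho2 C δ β) with hkδ | hkδ
  · rw [hC.Tr_eq_Tr_of_lamb_lt hαδ hδβ hβ hlamb hkδ.le]
    exact hαδ.trans_lt (hC.lt_Tr_of_lt_rho2 hδβ hβ hkδ)
  · obtain ⟨j, rfl⟩ := Nat.exists_eq_add_of_le hkδ
    rw [hC.Tr_rho2_add_of_lamb_lt hαδ hδβ hβ hlamb]
    exact hC.lt_Tr_of_lt_rho2 hαδ hδ (by omega)

end IsCSeq

end Walks

theorem walk_trace_concat_general (κ : Cardinal.{0})
    (C : Ordinal.{0} → Set Ordinal.{0}) (hC : IsCSeq κ.ord C)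
    (α δ β : Ordinal) (h1 : α < δ) (h2 : δ < β) (h3 : β < κ.ord)
    (h4 : lamb C δ β < α) :
    trL C α β = trL C δ β ++ trL C α δ := by
  unfold trL
  rw [hC.rho2_eq_add_of_lamb_lt h1.le h2.le h3 h4, List.range_add, List.map_append,
    List.map_map]
  congr 1
  · exact List.map_congr_left fun i hi =>
      hC.Tr_eq_Tr_of_lamb_lt h1.le h2.le h3 h4 (List.mem_range.1 hi).le
  · exact List.map_congr_left fun j _ => hC.Tr_rho2_add_of_lamb_lt h1.le h2.le h3 h4 j

/-- If `λ(δ,β) < α < δ < β < κ`, then `tr(α,β) = tr(δ,β) ⌢ tr(α,δ)`. -/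
theorem walk_trace_concat (κ : Cardinal.{0}) (hreg : κ.IsRegular) (hκ : ℵ₀ < κ)
    (C : Ordinal.{0} → Set Ordinal.{0}) (hC : IsCSeq κ.ord C)
    (α δ β : Ordinal) (h1 : α < δ) (h2 : δ < β) (h3 : β < κ.ord)
    (h4 : lamb C δ β < α) :
    trL C α β = trL C δ β ++ trL C α δ :=
  walk_trace_concat_general κ C hC α δ β h1 h2 h3 h4

end
end
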